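/- arXiv:math/0506383 — 2 statements merged into one kernel-verified Lean document; each statement's English description precedes it below -/
import Mathlib

section
/- The vector space of differentials Ω_{G/H} of G over H exists: the free κ[[e^G]]-vector space V on basis v₁,…,vₙ together with d(Φ) = Σᵢ (∂Φ/∂Xᵢ) vᵢ is the universal object in the category of κ[[e^H]]-derivations on κ[[e^G]] compatible with partial derivations. Moreover dX₁,…,dXₙ form a basis of Ω_{G/H} for any set of variables X₁,…,Xₙ. -/
/-- Data exhibiting a totally ordered abelian group `G` as generated freely by a
subgroup `H` and `n` elements `u 0, …, u (n-1)`: every `g ∈ G` is uniquely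
`h + Σᵢ sᵢ • uᵢ` with `h ∈ H`; `coord g` records the unique exponents `sᵢ`. -/
structure FreeData (G : Type*) [AddCommGroup G] [LinearOrder G] [IsOrderedAddMonoid G] (n : ℕ) where
  H : AddSubgroup G
  u : Fin n → G
  coord : G → Fin n → ℤ
  sub_mem : ∀ g : G, g - ∑ i, coord g i • u i ∈ H
  coord_unique : ∀ g : G, ∀ s : Fin n → ℤ, g - ∑ i, s i • u i ∈ H → s = coord g

variable {κ : Type*} [Field κ] {G : Type*} [AddCommGroup G] [LinearOrder G] [IsOrderedAddMonoid G] {n : ℕ}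

/-- The partial derivation `∂/∂Xᵢ` with respect to the variable `Xᵢ = e^{uᵢ}`,
defined termwise: it multiplies the term `φ e^h X₁^{j₁} ⋯ Xₙ^{jₙ}` by `jᵢ` and
decreases the exponent of `Xᵢ` by one. -/
noncomputable def FreeData.pderiv (F : FreeData G n) (i : Fin n) (Φ : HahnSeries G κ) :
    HahnSeries G κ where
  coeff g := (F.coord (g + F.u i) i : κ) * Φ.coeff (g + F.u i)
  isPWO_support' := by
    have hsub : Function.support
        (fun g => (F.coord (g + F.u i) i : κ) * Φ.coeff (g + F.u i)) ⊆
        (fun x => x - F.u i) '' Φ.support := by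
      intro g hg
      refine ⟨g + F.u i, ?_, add_sub_cancel_right g (F.u i)⟩
      intro h
      simp [h] at hg
    exact (Φ.isPWO_support.image_of_monotone
      (fun a b hab => sub_le_sub_right hab _)).mono hsub

/-- The variable `Xᵢ = e^{uᵢ}` associated to free generating data. -/
noncomputable def FreeData.X (F : FreeData G n) (κ : Type*) [Field κ] (i : Fin n) :
    HahnSeries G κ :=
  HahnSeries.single (F.u i) 1

theorem test (F : FreeData G n) (i : Fin n) (Φ : HahnSeries G κ) : F.pderiv i Φ = F.pderiv i Φ := rfl

namespace FreeData

theorem coord_add (F : FreeData G n) (a b : G) :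
    F.coord (a + b) = F.coord a + F.coord b := by
  refine (F.coord_unique (a + b) (F.coord a + F.coord b) ?_).symm
  have h : (a + b) - ∑ i, (F.coord a + F.coord b) i • F.u i
      = (a - ∑ i, F.coord a i • F.u i) + (b - ∑ i, F.coord b i • F.u i) := by
    simp only [Pi.add_apply, add_smul, Finset.sum_add_distrib]
    abel
  rw [h]
  exact add_mem (F.sub_mem a) (F.sub_mem b)

theorem coord_of_mem (F : FreeData G n) {g : G} (hg : g ∈ F.H) : F.coord g = 0 := by
  refine (F.coord_unique g 0 ?_).symm
  simpa using hg

theorem coord_u (F : FreeData G n) (j : Fin n) : F.coord (F.u j) = Pi.single j 1 := by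
  refine (F.coord_unique (F.u j) (Pi.single j 1) ?_).symm
  have h : ∑ i, (Pi.single j 1 : Fin n → ℤ) i • F.u i = F.u j := by
    rw [Finset.sum_eq_single j]
    · simp
    · intro i _ hij; simp [Pi.single_eq_of_ne hij]
    · simp
  rw [h]
  simpa using zero_mem F.H

theorem coord_chain (F F' : FreeData G n) (hH : F'.H = F.H) (a : G) (j : Fin n) :
    F.coord a j = ∑ i, F'.coord a i * F.coord (F'.u i) j := by
  have key : (fun j => ∑ i, F'.coord a i * F.coord (F'.u i) j) = F.coord a := by
    refine F.coord_unique a _ ?_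
    have h1 : ∑ k, (∑ i, F'.coord a i * F.coord (F'.u i) k) • F.u k
        = ∑ i, F'.coord a i • (∑ k, F.coord (F'.u i) k • F.u k) := by
      simp only [Finset.sum_smul, mul_smul]
      rw [Finset.sum_comm]
      simp only [← Finset.smul_sum]
    rw [h1]
    have h2 : a - ∑ i, F'.coord a i • (∑ k, F.coord (F'.u i) k • F.u k)
        = (a - ∑ i, F'.coord a i • F'.u i)
          + ∑ i, F'.coord a i • (F'.u i - ∑ k, F.coord (F'.u i) k • F.u k) := by
      simp only [smul_sub, Finset.sum_sub_distrib]
      abel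
    rw [h2]
    exact add_mem (hH ▸ F'.sub_mem a)
      (sum_mem fun i _ => zsmul_mem (F.sub_mem (F'.u i)) _)
  exact congrFun key.symm j

end FreeData

theorem hahn_sum_coeff {α : Type*} (s : Finset α) (f : α → HahnSeries G κ) (g : G) :
    (∑ i ∈ s, f i).coeff g = ∑ i ∈ s, (f i).coeff g := by
  classical
  induction s using Finset.induction with
  | empty => simp
  | insert _ _ h ih => rw [Finset.sum_insert h, Finset.sum_insert h, HahnSeries.coeff_add, ih]

theorem hahn_sum_single {α : Type*} (s : Finset α) (c : G) (f : α → κ) :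
    ∑ i ∈ s, HahnSeries.single c (f i) = HahnSeries.single c (∑ i ∈ s, f i) := by
  ext g
  rw [hahn_sum_coeff]
  simp only [HahnSeries.coeff_single]
  split_ifs <;> simp

theorem hahn_mul_single_coeff (x : HahnSeries G κ) (b g : G) (r : κ) :
    (x * HahnSeries.single b r).coeff g = x.coeff (g - b) * r := by
  have h : g = (g - b) + b := by abel
  conv_lhs => rw [h]
  exact HahnSeries.coeff_mul_single_add

namespace FreeData

theorem pderiv_coeff (F : FreeData G n) (i : Fin n) (Φ : HahnSeries G κ) (g : G) :
    (F.pderiv i Φ).coeff g = (F.coord (g + F.u i) i : κ) * Φ.coeff (g + F.u i) :=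
  rfl

theorem pderiv_add (F : FreeData G n) (i : Fin n) (Φ Ψ : HahnSeries G κ) :
    F.pderiv i (Φ + Ψ) = F.pderiv i Φ + F.pderiv i Ψ := by
  ext g
  simp only [pderiv_coeff, HahnSeries.coeff_add, mul_add]

theorem pderiv_single (F : FreeData G n) (j : Fin n) (a : G) (c : κ) :
    F.pderiv j (HahnSeries.single a c)
      = HahnSeries.single (a - F.u j) ((F.coord a j : κ) * c) := by
  ext g
  rw [pderiv_coeff]
  by_cases h : g = a - F.u j
  · have h2 : g + F.u j = a := by rw [h]; abel
    rw [h2, h, HahnSeries.coeff_single_same, HahnSeries.coeff_single_same]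
  · have h2 : g + F.u j ≠ a := by
      intro hc; exact h (by rw [← hc]; abel)
    rw [HahnSeries.coeff_single_of_ne h2, HahnSeries.coeff_single_of_ne h, mul_zero]

theorem pderiv_of_mem (F : FreeData G n) (i : Fin n) (φ : HahnSeries G κ)
    (hφ : ∀ g : G, φ.coeff g ≠ 0 → g ∈ F.H) : F.pderiv i φ = 0 := by
  ext g
  rw [pderiv_coeff, HahnSeries.coeff_zero]
  by_cases h : φ.coeff (g + F.u i) = 0
  · rw [h, mul_zero]
  · rw [F.coord_of_mem (hφ _ h)]
    simp

noncomputable def mulCoord (F : FreeData G n) (i : Fin n) (Φ : HahnSeries G κ) :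
    HahnSeries G κ where
  coeff g := (F.coord g i : κ) * Φ.coeff g
  isPWO_support' := by
    refine Φ.isPWO_support.mono fun g hg => ?_
    simp only [Function.mem_support] at hg ⊢
    intro h
    exact hg (by rw [h, mul_zero])

theorem mulCoord_support (F : FreeData G n) (i : Fin n) (Φ : HahnSeries G κ) :
    (F.mulCoord i Φ).support ⊆ Φ.support := by
  intro g hg
  simp only [HahnSeries.mem_support] at hg ⊢
  intro h
  exact hg (show (F.coord g i : κ) * Φ.coeff g = 0 by rw [h, mul_zero])

theorem pderiv_eq_shift (F : FreeData G n) (i : Fin n) (Φ : HahnSeries G κ) :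
    F.pderiv i Φ = HahnSeries.single (-F.u i) 1 * F.mulCoord i Φ := by
  ext g
  have h : g = -F.u i + (g + F.u i) := by abel
  conv_rhs => rw [h, add_comm (-F.u i) (g + F.u i), HahnSeries.coeff_single_mul_add]
  rw [one_mul]
  rfl

theorem mulCoord_mul (F : FreeData G n) (i : Fin n) (Φ Ψ : HahnSeries G κ) :
    F.mulCoord i (Φ * Ψ) = Φ * F.mulCoord i Ψ + F.mulCoord i Φ * Ψ := by
  ext g
  rw [HahnSeries.coeff_add,
    HahnSeries.coeff_mul_right' Ψ.isPWO_support (F.mulCoord_support i Ψ),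
    HahnSeries.coeff_mul_left' Φ.isPWO_support (F.mulCoord_support i Φ)]
  show (F.coord g i : κ) * (Φ * Ψ).coeff g = _
  rw [HahnSeries.coeff_mul, Finset.mul_sum, ← Finset.sum_add_distrib]
  refine Finset.sum_congr rfl fun x hx => ?_
  obtain ⟨-, -, hxy⟩ := (Finset.mem_addAntidiagonal).1 hx
  show (F.coord g i : κ) * (Φ.coeff x.1 * Ψ.coeff x.2)
    = Φ.coeff x.1 * ((F.coord x.2 i : κ) * Ψ.coeff x.2)
      + (F.coord x.1 i : κ) * Φ.coeff x.1 * Ψ.coeff x.2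
  rw [← hxy, F.coord_add]
  simp only [Pi.add_apply]
  push_cast
  ring

theorem pderiv_mul (F : FreeData G n) (i : Fin n) (Φ Ψ : HahnSeries G κ) :
    F.pderiv i (Φ * Ψ) = Φ * F.pderiv i Ψ + Ψ * F.pderiv i Φ := by
  rw [pderiv_eq_shift, pderiv_eq_shift, pderiv_eq_shift, mulCoord_mul]
  ring

theorem pderiv_compat (F F' : FreeData G n) (hH : F'.H = F.H) (Φ : HahnSeries G κ)
    (j : Fin n) :
    F.pderiv j Φ = ∑ i, F'.pderiv i Φ
      * HahnSeries.single (F'.u i - F.u j) ((F.coord (F'.u i) j : κ)) := by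
  ext g
  rw [hahn_sum_coeff]
  have hterm : ∀ i : Fin n,
      (F'.pderiv i Φ * HahnSeries.single (F'.u i - F.u j)
        ((F.coord (F'.u i) j : κ))).coeff g
      = (F'.coord (g + F.u j) i : κ) * Φ.coeff (g + F.u j) * (F.coord (F'.u i) j : κ) := by
    intro i
    rw [hahn_mul_single_coeff, pderiv_coeff,
      show g - (F'.u i - F.u j) + F'.u i = g + F.u j by abel]
  rw [Finset.sum_congr rfl fun i _ => hterm i, pderiv_coeff,
    F.coord_chain F' hH (g + F.u j) j]
  push_cast
  rw [Finset.sum_mul]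
  refine Finset.sum_congr rfl fun i _ => ?_
  ring

end FreeData


theorem FreeData.d_X (F : FreeData G n) (j i : Fin n) :
    F.pderiv i (F.X κ j) = (Pi.single j 1 : Fin n → HahnSeries G κ) i := by
  classical
  rw [FreeData.X, F.pderiv_single, mul_one]
  by_cases h : i = j
  · subst h
    rw [Pi.single_eq_same, F.coord_u, Pi.single_eq_same]
    simpa using HahnSeries.single_zero_one
  · rw [Pi.single_eq_of_ne h, F.coord_u, Pi.single_eq_of_ne h]
    simp [HahnSeries.single_eq_zero]

theorem sum_proj_smulRight_apply (v : Fin n → (Fin n → HahnSeries G κ))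
    (x : Fin n → HahnSeries G κ) :
    (∑ i, (LinearMap.proj (R := HahnSeries G κ)
      (φ := fun _ : Fin n => HahnSeries G κ) i).smulRight (v i)) x = ∑ i, x i • v i := by
  rw [LinearMap.sum_apply]
  simp [LinearMap.smulRight_apply]

theorem sum_proj_smulRight_single (v : Fin n → (Fin n → HahnSeries G κ)) (k : Fin n) :
    (∑ i, (LinearMap.proj (R := HahnSeries G κ)
      (φ := fun _ : Fin n => HahnSeries G κ) i).smulRight (v i)) (Pi.single k 1) = v k := by
  classical
  rw [sum_proj_smulRight_apply, Finset.sum_eq_single k]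
  · rw [Pi.single_eq_same, one_smul]
  · intro i _ h
    rw [Pi.single_eq_of_ne h, zero_smul]
  · simp

theorem hahn_prod_single_sum (a b : G) (e : Fin n → G) (r s : Fin n → ℤ) :
    ∑ i, (HahnSeries.single (a - e i) ((r i : κ))
        * HahnSeries.single (e i - b) ((s i : κ)))
      = HahnSeries.single (a - b) (((∑ i, r i * s i : ℤ) : κ)) := by
  have h : ∀ i : Fin n, HahnSeries.single (a - e i) ((r i : κ))
      * HahnSeries.single (e i - b) ((s i : κ))
      = HahnSeries.single (a - b) (((r i * s i : ℤ) : κ)) := by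
    intro i
    rw [HahnSeries.single_mul_single, show a - e i + (e i - b) = a - b by abel]
    norm_cast
  rw [Finset.sum_congr rfl fun i _ => h i, hahn_sum_single]
  norm_cast

theorem hahn_single_pi (k l : Fin n) (a b : Fin n → G) (hab : a k = b k) :
    HahnSeries.single (a k - b l) (((Pi.single k 1 : Fin n → ℤ) l : κ))
      = (Pi.single k (1 : HahnSeries G κ) : Fin n → HahnSeries G κ) l := by
  classical
  by_cases h : l = k
  · subst h
    rw [Pi.single_eq_same, Pi.single_eq_same, hab, sub_self]
    simpa using HahnSeries.single_zero_one
  · rw [Pi.single_eq_of_ne h, Pi.single_eq_of_ne h]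
    simp [HahnSeries.single_eq_zero]


noncomputable def TT (v : Fin n → (Fin n → HahnSeries G κ)) :
    (Fin n → HahnSeries G κ) →ₗ[HahnSeries G κ] (Fin n → HahnSeries G κ) :=
  ∑ i, (LinearMap.proj (R := HahnSeries G κ)
    (φ := fun _ : Fin n => HahnSeries G κ) i).smulRight (v i)

theorem TT_apply (v : Fin n → (Fin n → HahnSeries G κ)) (x : Fin n → HahnSeries G κ)
    (l : Fin n) : TT v x l = ∑ i, x i * v i l := by
  rw [TT, sum_proj_smulRight_apply]
  rw [Finset.sum_apply]
  simp [Pi.smul_apply, smul_eq_mul]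

theorem TT_single (v : Fin n → (Fin n → HahnSeries G κ)) (k : Fin n) :
    TT v (Pi.single k 1) = v k := by
  rw [TT, sum_proj_smulRight_single]

theorem FreeData.basis_exists (F F' : FreeData G n) (hH : F'.H = F.H) :
    ∃ b : Module.Basis (Fin n) (HahnSeries G κ) (Fin n → HahnSeries G κ),
      ∀ i j, b i j = F.pderiv j (F'.X κ i) := by
  classical
  set w : Fin n → (Fin n → HahnSeries G κ) := fun k j =>
    HahnSeries.single (F'.u k - F.u j) ((F.coord (F'.u k) j : κ)) with hwdef
  set z : Fin n → (Fin n → HahnSeries G κ) := fun k i =>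
    HahnSeries.single (F.u k - F'.u i) ((F'.coord (F.u k) i : κ)) with hzdef
  have hTz : ∀ k, TT w (z k) = Pi.single k 1 := by
    intro k
    funext l
    rw [TT_apply]
    have : ∀ i : Fin n, z k i * w i l
        = HahnSeries.single (F.u k - F'.u i) ((F'.coord (F.u k) i : κ))
          * HahnSeries.single (F'.u i - F.u l) ((F.coord (F'.u i) l : κ)) := fun i => rfl
    rw [Finset.sum_congr rfl fun i _ => this i, hahn_prod_single_sum,
      ← F.coord_chain F' hH (F.u k) l, F.coord_u]
    exact hahn_single_pi k l F.u F.u rfl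
  have hSw : ∀ k, TT z (w k) = Pi.single k 1 := by
    intro k
    funext l
    rw [TT_apply]
    have : ∀ i : Fin n, w k i * z i l
        = HahnSeries.single (F'.u k - F.u i) ((F.coord (F'.u k) i : κ))
          * HahnSeries.single (F.u i - F'.u l) ((F'.coord (F.u i) l : κ)) := fun i => rfl
    rw [Finset.sum_congr rfl fun i _ => this i, hahn_prod_single_sum,
      ← F'.coord_chain F hH.symm (F'.u k) l, F'.coord_u]
    exact hahn_single_pi k l F'.u F'.u rfl
  have h1 : TT w ∘ₗ TT z = LinearMap.id := by
    refine Module.Basis.ext (Pi.basisFun (HahnSeries G κ) (Fin n)) fun k => ?_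
    rw [Pi.basisFun_apply, LinearMap.comp_apply, TT_single, hTz, LinearMap.id_apply]
  have h2 : TT z ∘ₗ TT w = LinearMap.id := by
    refine Module.Basis.ext (Pi.basisFun (HahnSeries G κ) (Fin n)) fun k => ?_
    rw [Pi.basisFun_apply, LinearMap.comp_apply, TT_single, hSw, LinearMap.id_apply]
  refine ⟨(Pi.basisFun (HahnSeries G κ) (Fin n)).map
    (LinearEquiv.ofLinear (TT w) (TT z) h1 h2), ?_⟩
  intro i j
  rw [Module.Basis.map_apply, Pi.basisFun_apply]
  show TT w (Pi.single i 1) j = _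
  rw [TT_single, FreeData.X, F.pderiv_single, mul_one]



/-- Existence of differentials: the free `κ[[e^G]]`-vector space `V = (Fin n → κ[[e^G]])`
on the basis `v₁,…,vₙ`, together with `d(Φ) = Σᵢ (∂Φ/∂Xᵢ) vᵢ`, is the universal object
in the category of `κ[[e^H]]`-derivations on `κ[[e^G]]` compatible with partial
derivations; moreover `dX₁,…,dXₙ` form a basis of `Ω_{G/H}` for any set of variables
`X₁,…,Xₙ` (i.e. any free generating data `F'` with the same subgroup `H`). -/
theorem differentials_exist (F : FreeData G n)
    (W : Type*) [AddCommGroup W] [Module (HahnSeries G κ) W] :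
    -- `d Φ := Σᵢ (∂Φ/∂Xᵢ) vᵢ`, written in coordinates
    let d : HahnSeries G κ → (Fin n → HahnSeries G κ) := fun Φ i => F.pderiv i Φ
    -- `d` is a `κ[[e^H]]`-derivation compatible with partial derivations
    (∀ Φ Ψ : HahnSeries G κ, d (Φ + Ψ) = d Φ + d Ψ) ∧
    (∀ Φ Ψ : HahnSeries G κ, d (Φ * Ψ) = Φ • d Ψ + Ψ • d Φ) ∧
    (∀ φ : HahnSeries G κ, (∀ g : G, φ.coeff g ≠ 0 → g ∈ F.H) → d φ = 0) ∧
    (∀ F' : FreeData G n, F'.H = F.H →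
      ∀ Φ : HahnSeries G κ, d Φ = ∑ i, F'.pderiv i Φ • d (F'.X κ i)) ∧
    -- universal property
    (∀ δ : HahnSeries G κ → W,
      (∀ Φ Ψ : HahnSeries G κ, δ (Φ + Ψ) = δ Φ + δ Ψ) →
      (∀ Φ Ψ : HahnSeries G κ, δ (Φ * Ψ) = Φ • δ Ψ + Ψ • δ Φ) →
      (∀ φ : HahnSeries G κ, (∀ g : G, φ.coeff g ≠ 0 → g ∈ F.H) → δ φ = 0) →
      (∀ F' : FreeData G n, F'.H = F.H →
        ∀ Φ : HahnSeries G κ, δ Φ = ∑ i, F'.pderiv i Φ • δ (F'.X κ i)) →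
      ∃! f : (Fin n → HahnSeries G κ) →ₗ[HahnSeries G κ] W,
        ∀ Φ : HahnSeries G κ, f (d Φ) = δ Φ) ∧
    -- `dX₁,…,dXₙ` is a basis for any set of variables
    (∀ F' : FreeData G n, F'.H = F.H →
      ∃ b : Module.Basis (Fin n) (HahnSeries G κ) (Fin n → HahnSeries G κ),
        ∀ i, b i = d (F'.X κ i)) := by
  classical
  intro d
  refine ⟨?_, ?_, ?_, ?_, ?_, ?_⟩
  · intro Φ Ψ
    funext i
    exact F.pderiv_add i Φ Ψ
  · intro Φ Ψ
    funext i
    show F.pderiv i (Φ * Ψ) = Φ • F.pderiv i Ψ + Ψ • F.pderiv i Φ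
    rw [smul_eq_mul, smul_eq_mul]
    exact F.pderiv_mul i Φ Ψ
  · intro φ hφ
    funext i
    exact F.pderiv_of_mem i φ hφ
  · intro F' hH Φ
    funext j
    show F.pderiv j Φ = (∑ i, F'.pderiv i Φ • d (F'.X κ i)) j
    rw [Finset.sum_apply, F.pderiv_compat F' hH Φ j]
    refine Finset.sum_congr rfl fun i _ => ?_
    rw [Pi.smul_apply, smul_eq_mul]
    show _ = F'.pderiv i Φ * F.pderiv j (F'.X κ i)
    rw [FreeData.X, F.pderiv_single, mul_one]
  · intro δ hadd hmul hvanish hcompat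
    refine ⟨∑ j, (LinearMap.proj (R := HahnSeries G κ)
        (φ := fun _ : Fin n => HahnSeries G κ) j).smulRight (δ (F.X κ j)), ?_, ?_⟩
    · intro Φ
      rw [LinearMap.sum_apply]
      simp only [LinearMap.smulRight_apply, LinearMap.proj_apply]
      exact (hcompat F rfl Φ).symm
    · intro f' hf'
      refine Module.Basis.ext (Pi.basisFun (HahnSeries G κ) (Fin n)) fun j => ?_
      have hdX : d (F.X κ j) = Pi.single j 1 := funext fun i => F.d_X j i
      rw [Pi.basisFun_apply, ← hdX, hf', LinearMap.sum_apply]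
      simp only [LinearMap.smulRight_apply, LinearMap.proj_apply]
      exact hcompat F rfl (F.X κ j)
  · intro F' hH
    obtain ⟨b, hb⟩ := F.basis_exists (κ := κ) F' hH
    exact ⟨b, fun i => funext fun j => hb i j⟩
end

section
/- (Invariance of residues) For any two sets of variables X₁,…,Xₙ and Y₁,…,Yₙ of κ[[e^G]] over κ[[e^H]], the residue maps res_{X₁,…,Xₙ} and res_{Y₁,…,Yₙ} on generalized fractions with numerators in ∧ⁿΩ_{G/H} coincide. Concretely, if Yᵢ = e^{hᵢ}X₁^{s_{i1}}⋯Xₙ^{s_{in}}, then dlog Y₁∧⋯∧dlog Yₙ = det(s_{ij})·dlog X₁∧⋯∧dlog Xₙ, and for all Φ the constant term in κ[[e^H]] of Φ expanded in the X-variables equals the appropriate residue computed in the Y-variables. -/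
variable {κ : Type*} [Field κ] {G : Type*} [AddCommGroup G] [LinearOrder G] [IsOrderedAddMonoid G] {n : ℕ}

/- ### Auxiliary lemmas -/

theorem FreeData.prod_single' {ι : Type*} (s : Finset ι) (a : ι → G) (c : ι → κ) :
    ∏ i ∈ s, HahnSeries.single (a i) (c i) =
      HahnSeries.single (∑ i ∈ s, a i) (∏ i ∈ s, c i) := by
  induction s using Finset.cons_induction with
  | empty => simp [HahnSeries.single_zero_one]
  | cons i s hi ih => simp [Finset.prod_cons, Finset.sum_cons, ih, HahnSeries.single_mul_single]

theorem FreeData.single_div_single (a b : G) (c : κ) :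
    (HahnSeries.single a c) / (HahnSeries.single b 1) = HahnSeries.single (a - b) c := by
  rw [div_eq_iff (HahnSeries.single_ne_zero one_ne_zero), HahnSeries.single_mul_single,
    sub_add_cancel, mul_one]

theorem FreeData.smul_single (c : κ) (a : G) :
    c • HahnSeries.single a (1 : κ) = HahnSeries.single a c := by
  ext g
  by_cases h : g = a <;> simp [HahnSeries.coeff_smul, HahnSeries.coeff_single, h]

theorem FreeData.pderiv_single_s17 (F : FreeData G n) (k : Fin n) (a : G) :
    F.pderiv k (HahnSeries.single a (1 : κ)) =
      HahnSeries.single (a - F.u k) (F.coord a k : κ) := by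
  ext g
  simp only [FreeData.pderiv, HahnSeries.coeff_single]
  by_cases h : g = a - F.u k
  · subst h
    simp [sub_add_cancel]
  · have h' : g + F.u k ≠ a := fun hc => h (by rw [← hc]; abel)
    simp [h, h']

/-- `coord` of a basis vector is a Kronecker delta. -/
theorem FreeData.coord_u_s17 (F : FreeData G n) (j : Fin n) :
    F.coord (F.u j) = fun k => if j = k then 1 else 0 := by
  refine (F.coord_unique (F.u j) _ ?_).symm
  have : ∑ i, (if j = i then (1:ℤ) else 0) • F.u i = F.u j := by
    rw [Finset.sum_eq_single j] <;> simp +contextual [eq_comm]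
  rw [this, sub_self]
  exact zero_mem _

/-- The change-of-basis matrix has an inverse, hence unit determinant. -/
theorem FreeData.coord_matrix_isUnit_det (F F' : FreeData G n) (hH : F.H = F'.H) :
    IsUnit (Matrix.of fun i j => F.coord (F'.u i) j).det := by
  set S : Matrix (Fin n) (Fin n) ℤ := Matrix.of fun i j => F.coord (F'.u i) j
  set T : Matrix (Fin n) (Fin n) ℤ := Matrix.of fun j i => F'.coord (F.u j) i
  have hTS : T * S = 1 := by
    ext j k
    have key : (fun k => ∑ i, T j i * S i k) = F.coord (F.u j) := by
      refine F.coord_unique (F.u j) _ ?_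
      have h1 : F.u j - ∑ i, F'.coord (F.u j) i • F'.u i ∈ F.H := by
        rw [hH]; exact F'.sub_mem (F.u j)
      have h2 : ∀ i, F'.u i - ∑ k, F.coord (F'.u i) k • F.u k ∈ F.H :=
        fun i => F.sub_mem (F'.u i)
      have heq : F.u j - ∑ k, (∑ i, T j i * S i k) • F.u k =
          (F.u j - ∑ i, F'.coord (F.u j) i • F'.u i) +
          ∑ i, F'.coord (F.u j) i • (F'.u i - ∑ k, F.coord (F'.u i) k • F.u k) := by
        simp only [smul_sub, Finset.sum_sub_distrib, Finset.smul_sum, smul_smul, S, T,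
          Matrix.of_apply]
        rw [Finset.sum_comm]
        simp only [Finset.sum_smul]
        abel
      rw [heq]
      exact add_mem h1 (sum_mem fun i _ => zsmul_mem (h2 i) _)
    have := congrFun key k
    rw [F.coord_u_s17 j] at this
    simp only [Matrix.mul_apply, Matrix.one_apply]
    simpa using this
  have hdet : T.det * S.det = 1 := by rw [← Matrix.det_mul, hTS, Matrix.det_one]
  exact IsUnit.of_mul_eq_one _ ((mul_comm _ _).trans hdet)

/-- Invariance of residues: for two sets of variables `X₁,…,Xₙ` and `Y₁,…,Yₙ`
(free generating data `F`, `F'` with the same subgroup `H`), with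
`Yᵢ = e^{hᵢ}X₁^{s_{i1}}⋯Xₙ^{s_{in}}` (so `s i j = F.coord (F'.u i) j`), one has
`dlog Y₁∧⋯∧dlog Yₙ = det(s_{ij})·dlog X₁∧⋯∧dlog Xₙ`; consequently, whenever the
same generalized fraction is written as `[Φ·dlog X / log X]` and `[Ψ·dlog Y / log Y]`
(i.e. `Ψ·(dlog Y₁∧⋯∧dlog Yₙ) = det(s_{ij})·Φ·(dlog X₁∧⋯∧dlog Xₙ)` as `n`-forms),
its residue, namely the constant term in `κ[[e^H]]`, is the same computed in either
set of variables: `res_{X} = res_{Y}`. -/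
theorem invariance_of_residues (F F' : FreeData G n) (hH : F.H = F'.H) :
    -- `dlog Y₁∧⋯∧dlog Yₙ = det(s)·dlog X₁∧⋯∧dlog Xₙ`, in coordinates w.r.t. `dX₁∧⋯∧dXₙ`
    (Matrix.of fun i k => F.pderiv k (F'.X κ i) / F'.X κ i).det =
      (((Matrix.of fun i j => F.coord (F'.u i) j).det : ℤ) : κ) •
        HahnSeries.single (-∑ i, F.u i) (1 : κ) ∧
    -- the residues agree: if `Ψ dlog Y∧ = det(s) • Φ dlog X∧` then the constant
    -- terms of `Φ` (the `X`-residue) and `Ψ` (the `Y`-residue) in `κ[[e^H]]` coincide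
    (∀ Φ Ψ : HahnSeries G κ,
      Ψ * (Matrix.of fun i k => F.pderiv k (F'.X κ i) / F'.X κ i).det =
        (((Matrix.of fun i j => F.coord (F'.u i) j).det : ℤ) : κ) •
          (Φ * HahnSeries.single (-∑ i, F.u i) (1 : κ)) →
      ∀ h ∈ F.H, Ψ.coeff h = Φ.coeff h) := by
  set d : κ := (((Matrix.of fun i j => F.coord (F'.u i) j).det : ℤ) : κ) with hd
  set M : Matrix (Fin n) (Fin n) (HahnSeries G κ) :=
    Matrix.of fun i k => F.pderiv k (F'.X κ i) / F'.X κ i with hM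
  -- the matrix M factors as (constants) * diagonal
  have hentry : ∀ i k, M i k =
      HahnSeries.single (-F.u k) ((F.coord (F'.u i) k : κ)) := by
    intro i k
    rw [hM, Matrix.of_apply, FreeData.X, FreeData.pderiv_single_s17, FreeData.single_div_single]
    congr 1
    abel_nf
  have hfac : M =
      (HahnSeries.C (Γ := G) (R := κ)).mapMatrix
          (Matrix.of fun i k => ((F.coord (F'.u i) k : ℤ) : κ)) *
        Matrix.diagonal (fun k => HahnSeries.single (-F.u k) (1 : κ)) := by
    ext i k
    rw [Matrix.mul_diagonal, hentry, RingHom.mapMatrix_apply, Matrix.map_apply,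
      Matrix.of_apply, HahnSeries.C_apply, HahnSeries.single_mul_single, zero_add, mul_one]
  have hdetM : M.det = HahnSeries.single (-∑ i, F.u i) d := by
    rw [hfac, Matrix.det_mul, Matrix.det_diagonal, ← RingHom.map_det,
      FreeData.prod_single' Finset.univ (fun k => -F.u k) (fun _ => (1:κ))]
    have hcast : (Matrix.of fun i k => ((F.coord (F'.u i) k : ℤ) : κ)).det = d := by
      rw [hd]
      have : (Matrix.of fun i k => ((F.coord (F'.u i) k : ℤ) : κ)) =
          (Int.castRingHom κ).mapMatrix (Matrix.of fun i j => F.coord (F'.u i) j) := rfl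
      rw [this, ← RingHom.map_det]
      rfl
    rw [hcast, ← Finset.sum_neg_distrib, HahnSeries.C_apply,
      HahnSeries.single_mul_single, zero_add]
    simp
  have part1 : M.det = d • HahnSeries.single (-∑ i, F.u i) (1 : κ) := by
    rw [hdetM, FreeData.smul_single]
  refine ⟨part1, ?_⟩
  intro Φ Ψ hyp h _
  have hd0 : d ≠ 0 := by
    rcases Int.isUnit_iff.mp (FreeData.coord_matrix_isUnit_det F F' hH) with h1 | h1 <;>
      simp [hd, h1]
  rw [hdetM] at hyp
  have hc := congrArg (fun x : HahnSeries G κ => x.coeff (h + (-∑ i, F.u i))) hyp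
  simp only [HahnSeries.coeff_mul_single_add, HahnSeries.coeff_smul, smul_eq_mul] at hc
  rw [mul_one] at hc
  rw [mul_comm] at hc
  exact mul_left_cancel₀ hd0 hc
end
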